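/- arXiv:1008.2111 — 8 statements merged into one kernel-verified Lean document; each statement's English description precedes it below -/
import Mathlib

section
/- (Soundness of double pushout rewriting with respect to colimit decomposition.) Let C and J be categories and let 𝓛, 𝓚, 𝓡, 𝓧, 𝓨, 𝓩 : J ⥤ C be functors equipped with natural transformations α : 𝓚 ⟶ 𝓛, β : 𝓚 ⟶ 𝓡, ι : 𝓚 ⟶ 𝓨, μ : 𝓛 ⟶ 𝓧, γ : 𝓨 ⟶ 𝓧, ν : 𝓡 ⟶ 𝓩, δ : 𝓨 ⟶ 𝓩 satisfying μ ∘ α = γ ∘ ι and ν ∘ β = δ ∘ ι, such that for every object i of J both component squares are pushouts in C: the square with sides α_i : 𝓚_i → 𝓛_i, ι_i : 𝓚_i → 𝓨_i, μ_i : 𝓛_i → 𝓧_i, γ_i : 𝓨_i → 𝓧_i, and the square with sides β_i : 𝓚_i → 𝓡_i, ι_i : 𝓚_i → 𝓨_i, ν_i : 𝓡_i → 𝓩_i, δ_i : 𝓨_i → 𝓩_i. If colimit cocones of all six functors exist, then both induced squares on colimit objects are pushouts in C: the square with sides colim α, colim ι, colim μ, colim γ, and the square with sides colim β, colim ι, colim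 ν, colim δ. In other words, the six colimit objects together with the induced morphisms form a double pushout transformation diagram in C. -/
/-
Each pushout cocone on the square of colimit points restricts, at every `i : J`, to a
cocone on the `i`-th component square, which is a pushout; the resulting maps
`𝓧.obj i ⟶ s.pt` are compatible and so assemble into a cocone on `𝓧`, whose
descending map out of `colim 𝓧` is the required factorisation. Uniqueness is checked
componentwise, again by the universal property of the component pushouts.
-/

open CategoryTheory CategoryTheory.Limits

/-- Given a colimit cocone `cF` of `F`, a cocone `cG` of `G` and a natural transformation
`τ : F ⟶ G`, the induced morphism between the cocone points (`colim τ`). -/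
noncomputable def colimMapPt {J C : Type*} [Category J] [Category C] {F G : J ⥤ C}
    (τ : F ⟶ G) {cF : Cocone F} (hF : IsColimit cF) (cG : Cocone G) : cF.pt ⟶ cG.pt :=
  hF.desc ((Cocone.precompose τ).obj cG)


section

variable {J C : Type*} [Category J] [Category C]

@[simp]
lemma ι_colimMapPt {F G : J ⥤ C} (τ : F ⟶ G) {cF : Cocone F} (hF : IsColimit cF)
    (cG : Cocone G) (i : J) :
    cF.ι.app i ≫ colimMapPt τ hF cG = τ.app i ≫ cG.ι.app i :=
  hF.fac _ i

lemma colimMapPt_comp {F G H : J ⥤ C} (τ : F ⟶ G) (σ : G ⟶ H) {cF : Cocone F}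
    {cG : Cocone G} (hF : IsColimit cF) (hG : IsColimit cG) (cH : Cocone H) :
    colimMapPt τ hF cG ≫ colimMapPt σ hG cH = colimMapPt (τ ≫ σ) hF cH :=
  hF.hom_ext fun i => by
    rw [reassoc_of% ι_colimMapPt τ hF cG i, ι_colimMapPt, ι_colimMapPt, NatTrans.comp_app,
      Category.assoc]

namespace CategoryTheory.IsPushout

variable {𝓚 𝓛 𝓨 𝓧 : J ⥤ C} {α : 𝓚 ⟶ 𝓛} {ι : 𝓚 ⟶ 𝓨} {μ : 𝓛 ⟶ 𝓧} {γ : 𝓨 ⟶ 𝓧}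
  {cK : Cocone 𝓚} {cL : Cocone 𝓛} {cY : Cocone 𝓨} {hK : IsColimit cK}

lemma app_ι_inl_eq_app_ι_inr (s : PushoutCocone (colimMapPt α hK cL) (colimMapPt ι hK cY))
    (i : J) : α.app i ≫ cL.ι.app i ≫ s.inl = ι.app i ≫ cY.ι.app i ≫ s.inr := by
  rw [← reassoc_of% ι_colimMapPt α hK cL i, ← reassoc_of% ι_colimMapPt ι hK cY i, s.condition]

-- An `abbrev`, so that `hX.desc (coconeOfPushoutCocone hsq s)` is seen to land in `s.pt`.
noncomputable abbrev coconeOfPushoutCocone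
    (hsq : ∀ i, IsPushout (α.app i) (ι.app i) (μ.app i) (γ.app i))
    (s : PushoutCocone (colimMapPt α hK cL) (colimMapPt ι hK cY)) : Cocone 𝓧 where
  pt := s.pt
  ι :=
    { app := fun i =>
        (hsq i).desc (cL.ι.app i ≫ s.inl) (cY.ι.app i ≫ s.inr) (app_ι_inl_eq_app_ι_inr s i)
      naturality := fun i j f => by
        apply (hsq i).hom_ext
        · rw [← μ.naturality_assoc, (hsq j).inl_desc, cL.w_assoc, (hsq i).inl_desc_assoc]
          simp
        · rw [← γ.naturality_assoc, (hsq j).inr_desc, cY.w_assoc, (hsq i).inr_desc_assoc]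
          simp }

@[simp]
lemma app_μ_coconeOfPushoutCocone
    (hsq : ∀ i, IsPushout (α.app i) (ι.app i) (μ.app i) (γ.app i))
    (s : PushoutCocone (colimMapPt α hK cL) (colimMapPt ι hK cY)) (i : J) :
    μ.app i ≫ (coconeOfPushoutCocone hsq s).ι.app i = cL.ι.app i ≫ s.inl :=
  (hsq i).inl_desc _ _ _

@[simp]
lemma app_γ_coconeOfPushoutCocone
    (hsq : ∀ i, IsPushout (α.app i) (ι.app i) (μ.app i) (γ.app i))
    (s : PushoutCocone (colimMapPt α hK cL) (colimMapPt ι hK cY)) (i : J) :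
    γ.app i ≫ (coconeOfPushoutCocone hsq s).ι.app i = cY.ι.app i ≫ s.inr :=
  (hsq i).inr_desc _ _ _

theorem colimMapPt_of_app (hsq : ∀ i, IsPushout (α.app i) (ι.app i) (μ.app i) (γ.app i))
    {cX : Cocone 𝓧} (hL : IsColimit cL) (hY : IsColimit cY) (hX : IsColimit cX) :
    IsPushout (colimMapPt α hK cL) (colimMapPt ι hK cY)
      (colimMapPt μ hL cX) (colimMapPt γ hY cX) := by
  have hcomm : α ≫ μ = ι ≫ γ := NatTrans.ext (funext fun i => (hsq i).w)
  have w : colimMapPt α hK cL ≫ colimMapPt μ hL cX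
      = colimMapPt ι hK cY ≫ colimMapPt γ hY cX := by
    rw [colimMapPt_comp, colimMapPt_comp, hcomm]
  refine of_isColimit (PushoutCocone.IsColimit.mk w
    (fun s => hX.desc (coconeOfPushoutCocone hsq s)) (fun s => hL.hom_ext fun i => ?_)
    (fun s => hY.hom_ext fun i => ?_) fun s m hm₁ hm₂ => hX.hom_ext fun i => ?_)
  · rw [reassoc_of% ι_colimMapPt μ hL cX i, hX.fac, app_μ_coconeOfPushoutCocone]
  · rw [reassoc_of% ι_colimMapPt γ hY cX i, hX.fac, app_γ_coconeOfPushoutCocone]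
  · rw [hX.fac]
    refine (hsq i).hom_ext ?_ ?_
    · rw [app_μ_coconeOfPushoutCocone, ← reassoc_of% ι_colimMapPt μ hL cX i, hm₁]
    · rw [app_γ_coconeOfPushoutCocone, ← reassoc_of% ι_colimMapPt γ hY cX i, hm₂]

end CategoryTheory.IsPushout

end

theorem dpo_soundness_colimit_decomposition_general
    {J C : Type*} [Category J] [Category C]
    {𝓛 𝓚 𝓡 𝓧 𝓨 𝓩 : J ⥤ C}
    (α : 𝓚 ⟶ 𝓛) (β : 𝓚 ⟶ 𝓡) (ι : 𝓚 ⟶ 𝓨) (μ : 𝓛 ⟶ 𝓧) (γ : 𝓨 ⟶ 𝓧) (ν : 𝓡 ⟶ 𝓩) (δ : 𝓨 ⟶ 𝓩)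
    (hsq₁ : ∀ i : J, IsPushout (α.app i) (ι.app i) (μ.app i) (γ.app i))
    (hsq₂ : ∀ i : J, IsPushout (ι.app i) (β.app i) (δ.app i) (ν.app i))
    {cL : Cocone 𝓛} {cK : Cocone 𝓚} {cR : Cocone 𝓡}
    {cX : Cocone 𝓧} {cY : Cocone 𝓨} {cZ : Cocone 𝓩}
    (hL : IsColimit cL) (hK : IsColimit cK) (hR : IsColimit cR)
    (hX : IsColimit cX) (hY : IsColimit cY) (hZ : IsColimit cZ) :
    IsPushout (colimMapPt α hK cL) (colimMapPt ι hK cY)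
        (colimMapPt μ hL cX) (colimMapPt γ hY cX)
      ∧ IsPushout (colimMapPt ι hK cY) (colimMapPt β hK cR)
        (colimMapPt δ hY cZ) (colimMapPt ν hR cZ) :=
  ⟨IsPushout.colimMapPt_of_app hsq₁ hL hY hX, IsPushout.colimMapPt_of_app hsq₂ hY hR hZ⟩

/-- Soundness of double pushout rewriting w.r.t. colimit decomposition:
given a double square diagram of natural transformations whose component squares are all
pushouts, the induced squares on colimit objects form a double pushout transformation
diagram. -/
theorem dpo_soundness_colimit_decomposition
    {J C : Type*} [Category J] [Category C]
    {𝓛 𝓚 𝓡 𝓧 𝓨 𝓩 : J ⥤ C}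
    (α : 𝓚 ⟶ 𝓛) (β : 𝓚 ⟶ 𝓡) (ι : 𝓚 ⟶ 𝓨) (μ : 𝓛 ⟶ 𝓧) (γ : 𝓨 ⟶ 𝓧) (ν : 𝓡 ⟶ 𝓩) (δ : 𝓨 ⟶ 𝓩)
    (hcomm₁ : α ≫ μ = ι ≫ γ) (hcomm₂ : β ≫ ν = ι ≫ δ)
    (hsq₁ : ∀ i : J, IsPushout (α.app i) (ι.app i) (μ.app i) (γ.app i))
    (hsq₂ : ∀ i : J, IsPushout (ι.app i) (β.app i) (δ.app i) (ν.app i))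
    {cL : Cocone 𝓛} {cK : Cocone 𝓚} {cR : Cocone 𝓡}
    {cX : Cocone 𝓧} {cY : Cocone 𝓨} {cZ : Cocone 𝓩}
    (hL : IsColimit cL) (hK : IsColimit cK) (hR : IsColimit cR)
    (hX : IsColimit cX) (hY : IsColimit cY) (hZ : IsColimit cZ) :
    IsPushout (colimMapPt α hK cL) (colimMapPt ι hK cY)
        (colimMapPt μ hL cX) (colimMapPt γ hY cX)
      ∧ IsPushout (colimMapPt ι hK cY) (colimMapPt β hK cR)
        (colimMapPt δ hY cZ) (colimMapPt ν hR cZ) :=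
  dpo_soundness_colimit_decomposition_general α β ι μ γ ν δ hsq₁ hsq₂ hL hK hR hX hY hZ
end

section
/- (Double Pushout Lifting Lemma.) Let C be an adhesive category. Suppose given a double pushout transformation diagram in C for a rule L ←a− K −b→ R, with morphisms m : L → X, j : K → Y, n : R → Z, c : Y → X, d : Y → Z, such that a is a monomorphism and moreover either m is a monomorphism or b is a monomorphism. Suppose further given objects L', K', R', X' of C, morphisms ψ_L : L' → L, ψ_K : K' → K, ψ_R : R' → R, ψ_X : X' → X, a' : K' → L', b' : K' → R', m' : L' → X' such that the following three squares are pullbacks: (a', ψ_K; ψ_L, a), i.e. a ∘ ψ_K = ψ_L ∘ a' is a pullback of a along ψ_L; (b', ψ_K; ψ_R, b), i.e. b ∘ ψ_K = ψ_R ∘ b' is a pullback of b along ψ_R; and (m', ψ_L; ψ_X, m), i.e. m ∘ ψ_L = ψ_X ∘ m' is a pullback of m along ψ_X. Then there exist objects Y', Z' and morphisms j' : K' → Y', c' : Y' → X', d' : Y' → Z', n' : R' → Z', ψ_Y : Y' → Y, ψ_Z : Z' → Z such that: (i) m' ∘ a' = c' ∘ j' and the cospan (m', c') is a pushout of the span (a',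 j'); (ii) n' ∘ b' = d' ∘ j' and the cospan (d', n') is a pushout of the span (j', b'); (iii) the four squares j ∘ ψ_K = ψ_Y ∘ j', c ∘ ψ_Y = ψ_X ∘ c', d ∘ ψ_Y = ψ_Z ∘ d', and n ∘ ψ_R = ψ_Z ∘ n' are all pullbacks. -/
/-!
Take `Y'` to be the pullback of `c` along `ψX`. The first pushout is van Kampen (`a` is mono) and
the cube over it has pullbacks as back and side faces, so its top face is a pushout. In the second
square one of `j`, `b` is mono (`j` is a pullback of `m`, since `a` is mono), so it is van Kampen
too; the pulled-back span `(j', b')` then has a mono leg, hence a pushout `Z'`, and the van Kampen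
property makes the front faces of that cube pullbacks.
-/

open CategoryTheory CategoryTheory.Limits

namespace CategoryTheory.IsPushout.IsVanKampen

variable {C : Type*} [Category C] {W X Y Z : C}
  {f : W ⟶ X} {g : W ⟶ Y} {h : X ⟶ Z} {i : Y ⟶ Z} {H : IsPushout f g h i}

lemma exists_cube_filling_of_isPullback_left (H' : H.IsVanKampen)
    {W' X' Z' : C} {f' : W' ⟶ X'} {h' : X' ⟶ Z'} {αW : W' ⟶ W} {αX : X' ⟶ X} {αZ : Z' ⟶ Z}
    [HasPullback αZ i] (hf : IsPullback f' αW αX f) (hh : IsPullback h' αX αZ h) :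
    ∃ (Y' : C) (g' : W' ⟶ Y') (i' : Y' ⟶ Z') (αY : Y' ⟶ Y),
      IsPullback g' αW αY g ∧ IsPullback i' αY αZ i ∧ IsPushout f' g' h' i' := by
  have hi := IsPullback.of_hasPullback αZ i
  have w : (f' ≫ h') ≫ αZ = (αW ≫ g) ≫ i := by
    rw [Category.assoc, hh.w, reassoc_of% hf.w, Category.assoc, H.w]
  let g' := pullback.lift _ _ w
  have hg : IsPullback g' αW (pullback.snd αZ i) g := by
    refine IsPullback.of_right ?_ (pullback.lift_snd _ _ w) hi
    rw [pullback.lift_fst, ← H.w]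
    exact hf.paste_horiz hh
  refine ⟨_, g', _, _, hg, hi, ?_⟩
  exact (H' f' g' h' _ αW αX _ αZ hf hg hh.toCommSq hi.toCommSq
    ⟨(pullback.lift_fst _ _ w).symm⟩).2 ⟨hh, hi⟩

lemma exists_cube_filling_of_isPullback_back (H' : H.IsVanKampen)
    {W' X' Y' : C} {f' : W' ⟶ X'} {g' : W' ⟶ Y'} {αW : W' ⟶ W} {αX : X' ⟶ X} {αY : Y' ⟶ Y}
    [HasPushout f' g'] (hf : IsPullback f' αW αX f) (hg : IsPullback g' αW αY g) :
    ∃ (Z' : C) (h' : X' ⟶ Z') (i' : Y' ⟶ Z') (αZ : Z' ⟶ Z),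
      IsPushout f' g' h' i' ∧ IsPullback h' αX αZ h ∧ IsPullback i' αY αZ i := by
  have w : f' ≫ αX ≫ h = g' ≫ αY ≫ i := by
    rw [reassoc_of% hf.w, H.w, ← reassoc_of% hg.w]
  have hpo := IsPushout.of_hasPushout f' g'
  have hfronts := (H' f' g' _ _ αW αX αY (pushout.desc _ _ w) hf hg
    ⟨pushout.inl_desc _ _ w⟩ ⟨pushout.inr_desc _ _ w⟩ hpo.toCommSq).1 hpo
  exact ⟨_, _, _, _, hpo, hfronts⟩

end CategoryTheory.IsPushout.IsVanKampen

namespace CategoryTheory.Adhesive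

variable {C : Type*} [Category C] [Adhesive C] {W X Y Z : C}

lemma isVanKampen_of_mono_or {f : W ⟶ X} {g : W ⟶ Y} {h : X ⟶ Z} {i : Y ⟶ Z}
    (H : IsPushout f g h i) (hfg : Mono f ∨ Mono g) : H.IsVanKampen :=
  hfg.elim (fun _ => van_kampen H) (fun _ => van_kampen' H)

lemma hasPushout_of_mono_or (f : W ⟶ X) (g : W ⟶ Y) (hfg : Mono f ∨ Mono g) :
    HasPushout f g :=
  hfg.elim (fun _ => inferInstance) (fun _ => hasPushout_symmetry g f)

end CategoryTheory.Adhesive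

/-- Double Pushout Lifting Lemma: in an adhesive category (which has pullbacks
and pushouts along monomorphisms), a double pushout transformation diagram can be lifted
along pullbacks of its rule span and of its match. -/
theorem dpo_lifting
    {C : Type*} [Category C] [Adhesive C] [HasPullbacks C]
    {L K R X Y Z : C}
    (a : K ⟶ L) (b : K ⟶ R) (m : L ⟶ X) (j : K ⟶ Y) (n : R ⟶ Z) (c : Y ⟶ X) (d : Y ⟶ Z)
    [Mono a] (hmb : Mono m ∨ Mono b)
    (hpo₁ : IsPushout a j m c) (hpo₂ : IsPushout j b d n)
    {L' K' R' X' : C}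
    (ψL : L' ⟶ L) (ψK : K' ⟶ K) (ψR : R' ⟶ R) (ψX : X' ⟶ X)
    (a' : K' ⟶ L') (b' : K' ⟶ R') (m' : L' ⟶ X')
    (hpb_a : IsPullback a' ψK ψL a)
    (hpb_b : IsPullback b' ψK ψR b)
    (hpb_m : IsPullback m' ψL ψX m) :
    ∃ (Y' Z' : C) (j' : K' ⟶ Y') (c' : Y' ⟶ X') (d' : Y' ⟶ Z') (n' : R' ⟶ Z')
      (ψY : Y' ⟶ Y) (ψZ : Z' ⟶ Z),
      IsPushout a' j' m' c' ∧ IsPushout j' b' d' n' ∧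
      IsPullback j' ψK ψY j ∧ IsPullback c' ψY ψX c ∧
      IsPullback d' ψY ψZ d ∧ IsPullback n' ψR ψZ n := by
  obtain ⟨Y', j', c', ψY, hpb_j, hpb_c, hpo₁'⟩ :=
    (Adhesive.van_kampen hpo₁).exists_cube_filling_of_isPullback_left hpb_a hpb_m
  have hjb : Mono j ∨ Mono b := hmb.imp_left
    ((Adhesive.isPullback_of_isPushout_of_mono_left hpo₁).mono_snd_of_mono ·)
  have := Adhesive.hasPushout_of_mono_or j' b'
    (hjb.imp (hpb_j.mono_fst_of_mono ·) (hpb_b.mono_fst_of_mono ·))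
  obtain ⟨Z', d', n', ψZ, hpo₂', hpb_d, hpb_n⟩ :=
    (Adhesive.isVanKampen_of_mono_or hpo₂ hjb).exists_cube_filling_of_isPullback_back
      hpb_j hpb_b
  exact ⟨Y', Z', j', c', d', n', ψY, ψZ, hpo₁', hpo₂', hpb_j, hpb_c, hpb_d, hpb_n⟩
end

section
/- Let C be an adhesive category. Suppose the cospan (m : L → X, c : Y → X) is a pushout of the span (a : K → L, j : K → Y) with a a monomorphism. Let ψ_L : L' → L, ψ_K : K' → K, ψ_X : X' → X, a' : K' → L', m' : L' → X' be morphisms such that the squares a ∘ ψ_K = ψ_L ∘ a' and m ∘ ψ_L = ψ_X ∘ m' are pullbacks, and let (ψ_Y : Y' → Y, c' : Y' → X') be a pullback of the cospan (c : Y → X, ψ_X : X' → X). Then there is a unique morphism j' : K' → Y' with ψ_Y ∘ j' = j ∘ ψ_K and c' ∘ j' = m' ∘ a'; for this j' the square j ∘ ψ_K = ψ_Y ∘ j' is a pullback, and the cospan (m' : L' → X', c' : Y' → X') is a pushout of the span (a' : K' → L', j' : K' → Y'). -/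
/-!
Pulling the pushout square back along `ψX` gives a commutative cube over it. The comparison
map `j'` is the pullback lift; its face is a pullback because pasting it with the `c`-face gives
the composite `a`-`m` pullback. All four vertical faces being pullbacks, the Van Kampen property
of pushouts along monomorphisms makes the top face a pushout.
-/

open CategoryTheory CategoryTheory.Limits

namespace CategoryTheory.IsPullback

variable {C : Type*} [Category C]

theorem existsUnique_lift {P X Y Z : C} {fst : P ⟶ X} {snd : P ⟶ Y} {f : X ⟶ Z} {g : Y ⟶ Z}
    (hP : IsPullback fst snd f g) {W : C} (h : W ⟶ X) (k : W ⟶ Y) (w : h ≫ f = k ≫ g) :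
    ∃! l : W ⟶ P, l ≫ fst = h ∧ l ≫ snd = k :=
  ⟨hP.lift h k w, ⟨hP.lift_fst h k w, hP.lift_snd h k w⟩,
    fun _ hl => hP.hom_ext (by rw [hl.1, hP.lift_fst]) (by rw [hl.2, hP.lift_snd])⟩

theorem of_cube_faces {L K X Y L' K' X' Y' : C} {a : K ⟶ L} {j : K ⟶ Y} {m : L ⟶ X}
    {c : Y ⟶ X} {ψL : L' ⟶ L} {ψK : K' ⟶ K} {ψX : X' ⟶ X} {ψY : Y' ⟶ Y} {a' : K' ⟶ L'}
    {j' : K' ⟶ Y'} {m' : L' ⟶ X'} {c' : Y' ⟶ X'} (w : a ≫ m = j ≫ c)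
    (hpb_a : IsPullback a' ψK ψL a) (hpb_m : IsPullback m' ψL ψX m)
    (hpb_c : IsPullback ψY c' c ψX) (hj : j' ≫ ψY = ψK ≫ j) (hj' : j' ≫ c' = a' ≫ m') :
    IsPullback j' ψK ψY j := by
  have hcomp : IsPullback (j' ≫ c') ψK ψX (j ≫ c) := by
    rw [hj', ← w]
    exact hpb_a.paste_horiz hpb_m
  exact hcomp.of_right hj hpb_c.flip

end CategoryTheory.IsPullback

theorem dpo_left_square_lifting_general
    {C : Type*} [Category C] [Adhesive C]
    {L K X Y : C} (a : K ⟶ L) (j : K ⟶ Y) (m : L ⟶ X) (c : Y ⟶ X)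
    [Mono a] (hpo : IsPushout a j m c)
    {L' K' X' Y' : C}
    (ψL : L' ⟶ L) (ψK : K' ⟶ K) (ψX : X' ⟶ X) (ψY : Y' ⟶ Y)
    (a' : K' ⟶ L') (m' : L' ⟶ X') (c' : Y' ⟶ X')
    (hpb_a : IsPullback a' ψK ψL a)
    (hpb_m : IsPullback m' ψL ψX m)
    (hpb_c : IsPullback ψY c' c ψX) :
    (∃! j' : K' ⟶ Y', j' ≫ ψY = ψK ≫ j ∧ j' ≫ c' = a' ≫ m') ∧
    ∀ j' : K' ⟶ Y', (j' ≫ ψY = ψK ≫ j ∧ j' ≫ c' = a' ≫ m') →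
      IsPullback j' ψK ψY j ∧ IsPushout a' j' m' c' := by
  have hw : (ψK ≫ j) ≫ c = (a' ≫ m') ≫ ψX := by
    simp only [Category.assoc, ← hpo.w, hpb_m.w, reassoc_of% hpb_a.w]
  refine ⟨hpb_c.existsUnique_lift _ _ hw, fun j' ⟨hj, hj'⟩ => ?_⟩
  have hpb_j : IsPullback j' ψK ψY j := .of_cube_faces hpo.w hpb_a hpb_m hpb_c hj hj'
  exact ⟨hpb_j, (Adhesive.van_kampen hpo a' j' m' c' ψK ψL ψY ψX hpb_a hpb_j
    hpb_m.toCommSq hpb_c.flip.toCommSq ⟨hj'.symm⟩).mpr ⟨hpb_m, hpb_c.flip⟩⟩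

/-- in an adhesive category, pulling back a pushout along a monomorphism
(on the left of a DPO diagram) yields a pushout: there is a unique comparison morphism
`j'`, its square is a pullback, and the lifted square is again a pushout. -/
theorem dpo_left_square_lifting
    {C : Type*} [Category C] [Adhesive C] [HasPullbacks C]
    {L K X Y : C} (a : K ⟶ L) (j : K ⟶ Y) (m : L ⟶ X) (c : Y ⟶ X)
    [Mono a] (hpo : IsPushout a j m c)
    {L' K' X' Y' : C}
    (ψL : L' ⟶ L) (ψK : K' ⟶ K) (ψX : X' ⟶ X) (ψY : Y' ⟶ Y)
    (a' : K' ⟶ L') (m' : L' ⟶ X') (c' : Y' ⟶ X')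
    (hpb_a : IsPullback a' ψK ψL a)
    (hpb_m : IsPullback m' ψL ψX m)
    (hpb_c : IsPullback ψY c' c ψX) :
    (∃! j' : K' ⟶ Y', j' ≫ ψY = ψK ≫ j ∧ j' ≫ c' = a' ≫ m') ∧
    ∀ j' : K' ⟶ Y', (j' ≫ ψY = ψK ≫ j ∧ j' ≫ c' = a' ≫ m') →
      IsPullback j' ψK ψY j ∧ IsPushout a' j' m' c' :=
  dpo_left_square_lifting_general a j m c hpo ψL ψK ψX ψY a' m' c' hpb_a hpb_m hpb_c
end

section
/- (Pullback stability of the double pushout approach in adhesive categories.) Let C be an adhesive category and suppose given a double pushout transformation diagram in C for a rule L ←a− K −b→ R, with morphisms m : L → X, j : K → Y, n : R → Z, c : Y → X, d : Y → Z, where a and b are monomorphisms. Suppose given a commutative double-square diagram D' in C with objects L', K', R', X', Y', Z', a span L' ←a'− K' −b'→ R', morphisms m' : L' → X', j' : K' → Y', n' : R' → Z', c' : Y' → X', d' : Y' → Z' satisfying m' ∘ a' = c' ∘ j' and n' ∘ b' = d' ∘ j', together with morphisms ψ_L : L' → L, ψ_K : K' → K, ψ_R : R' → R, ψ_X : X'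 → X, ψ_Y : Y' → Y, ψ_Z : Z' → Z such that all six comparison squares (for a, b, m, j, n and also c, d, i.e. the squares a ∘ ψ_K = ψ_L ∘ a', b ∘ ψ_K = ψ_R ∘ b', m ∘ ψ_L = ψ_X ∘ m', j ∘ ψ_K = ψ_Y ∘ j', n ∘ ψ_R = ψ_Z ∘ n', c ∘ ψ_Y = ψ_X ∘ c', d ∘ ψ_Y = ψ_Z ∘ d') are pullbacks. Then D' is again a double pushout transformation diagram: the cospan (m', c') is a pushout of the span (a', j'), and the cospan (d', n') is a pushout of the span (j', b'). -/
open CategoryTheory CategoryTheory.Limits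

theorem CategoryTheory.Adhesive.isPushout_of_isPullback_of_mono_left
    {C : Type*} [Category C] [Adhesive C]
    {W X Y Z : C} {f : W ⟶ X} {g : W ⟶ Y} {h : X ⟶ Z} {i : Y ⟶ Z} [Mono f]
    (H : IsPushout f g h i)
    {W' X' Y' Z' : C} {f' : W' ⟶ X'} {g' : W' ⟶ Y'} {h' : X' ⟶ Z'} {i' : Y' ⟶ Z'}
    {αW : W' ⟶ W} {αX : X' ⟶ X} {αY : Y' ⟶ Y} {αZ : Z' ⟶ Z}
    (hf : IsPullback f' αW αX f) (hg : IsPullback g' αW αY g)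
    (hh : IsPullback h' αX αZ h) (hi : IsPullback i' αY αZ i)
    (w : f' ≫ h' = g' ≫ i') :
    IsPushout f' g' h' i' :=
  (Adhesive.van_kampen H f' g' h' i' αW αX αY αZ hf hg hh.toCommSq hi.toCommSq ⟨w⟩).mpr ⟨hh, hi⟩

theorem dpo_pullback_stable_general
    {C : Type*} [Category C] [Adhesive C]
    {L K R X Y Z : C}
    (a : K ⟶ L) (b : K ⟶ R) (m : L ⟶ X) (j : K ⟶ Y) (n : R ⟶ Z) (c : Y ⟶ X) (d : Y ⟶ Z)
    [Mono a] [Mono b]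
    (hpo₁ : IsPushout a j m c) (hpo₂ : IsPushout j b d n)
    {L' K' R' X' Y' Z' : C}
    (a' : K' ⟶ L') (b' : K' ⟶ R') (m' : L' ⟶ X') (j' : K' ⟶ Y') (n' : R' ⟶ Z')
    (c' : Y' ⟶ X') (d' : Y' ⟶ Z')
    (hcomm₁ : a' ≫ m' = j' ≫ c') (hcomm₂ : b' ≫ n' = j' ≫ d')
    (ψL : L' ⟶ L) (ψK : K' ⟶ K) (ψR : R' ⟶ R) (ψX : X' ⟶ X) (ψY : Y' ⟶ Y) (ψZ : Z' ⟶ Z)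
    (hpb_a : IsPullback a' ψK ψL a)
    (hpb_b : IsPullback b' ψK ψR b)
    (hpb_m : IsPullback m' ψL ψX m)
    (hpb_j : IsPullback j' ψK ψY j)
    (hpb_n : IsPullback n' ψR ψZ n)
    (hpb_c : IsPullback c' ψY ψX c)
    (hpb_d : IsPullback d' ψY ψZ d) :
    IsPushout a' j' m' c' ∧ IsPushout j' b' d' n' :=
  ⟨Adhesive.isPushout_of_isPullback_of_mono_left hpo₁ hpb_a hpb_j hpb_m hpb_c hcomm₁,
    (Adhesive.isPushout_of_isPullback_of_mono_left hpo₂.flip hpb_b hpb_j hpb_n hpb_d hcomm₂).flip⟩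

/-- Pullback stability of the double pushout approach in adhesive categories:
the pullback of a double pushout transformation diagram (for a rule of monomorphisms) along
a cartesian transformation of double square diagrams is again a double pushout
transformation diagram. -/
theorem dpo_pullback_stable
    {C : Type*} [Category C] [Adhesive C] [HasPullbacks C]
    {L K R X Y Z : C}
    (a : K ⟶ L) (b : K ⟶ R) (m : L ⟶ X) (j : K ⟶ Y) (n : R ⟶ Z) (c : Y ⟶ X) (d : Y ⟶ Z)
    [Mono a] [Mono b]
    (hpo₁ : IsPushout a j m c) (hpo₂ : IsPushout j b d n)
    {L' K' R' X' Y' Z' : C}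
    (a' : K' ⟶ L') (b' : K' ⟶ R') (m' : L' ⟶ X') (j' : K' ⟶ Y') (n' : R' ⟶ Z')
    (c' : Y' ⟶ X') (d' : Y' ⟶ Z')
    (hcomm₁ : a' ≫ m' = j' ≫ c') (hcomm₂ : b' ≫ n' = j' ≫ d')
    (ψL : L' ⟶ L) (ψK : K' ⟶ K) (ψR : R' ⟶ R) (ψX : X' ⟶ X) (ψY : Y' ⟶ Y) (ψZ : Z' ⟶ Z)
    (hpb_a : IsPullback a' ψK ψL a)
    (hpb_b : IsPullback b' ψK ψR b)
    (hpb_m : IsPullback m' ψL ψX m)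
    (hpb_j : IsPullback j' ψK ψY j)
    (hpb_n : IsPullback n' ψR ψZ n)
    (hpb_c : IsPullback c' ψY ψX c)
    (hpb_d : IsPullback d' ψY ψZ d) :
    IsPushout a' j' m' c' ∧ IsPushout j' b' d' n' :=
  dpo_pullback_stable_general a b m j n c d hpo₁ hpo₂ a' b' m' j' n' c' d' hcomm₁ hcomm₂ ψL ψK ψR ψX
    ψY ψZ hpb_a hpb_b hpb_m hpb_j hpb_n hpb_c hpb_d
end

section
/- (Global decomposition for double pushout rewriting.) Let C be an adhesive category and J a category. Suppose given a double pushout transformation diagram in C for a rule L ←a− K −b→ R with a and b monomorphisms, with morphisms m : L → X, j : K → Y, n : R → Z, c : Y → X, d : Y → Z. Suppose given a cospan w : X → U, t : Z → U with w ∘ c = t ∘ d, a functor 𝓤 : J ⥤ C whose colimit cocone φ : 𝓤 ⟶ Δ U is pullback-stable (universal), a functor 𝓧 : J ⥤ C with a cocone ξ : 𝓧 ⟶ Δ X, and a natural transformation ω : 𝓧 ⟶ 𝓤 such that for every object i of J the square w ∘ ξ_i = φ_i ∘ ω_i is a pullback. Then there exist functors 𝓛, 𝓚, 𝓡, 𝓨,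 𝓩 : J ⥤ C and natural transformations α : 𝓚 ⟶ 𝓛, β : 𝓚 ⟶ 𝓡, ι : 𝓚 ⟶ 𝓨, μ : 𝓛 ⟶ 𝓧, γ : 𝓨 ⟶ 𝓧, ν : 𝓡 ⟶ 𝓩, δ : 𝓨 ⟶ 𝓩 with μ ∘ α = γ ∘ ι and ν ∘ β = δ ∘ ι, together with colimit cocones of 𝓛, 𝓚, 𝓡, 𝓨, 𝓩 with apexes L, K, R, Y, Z respectively (and ξ is a colimit cocone of 𝓧), such that for every object i of J the component diagram (with rule 𝓛_i ←α_i− 𝓚_i −β_i→ 𝓡_i and morphisms μ_i, ι_i, ν_i, γ_i, δ_i) is a double pushout transformation diagram in C, and the induced morphisms on colimits are the original morphisms: colim α = a, colim β = b, colim μ = m, colim ι = j, colim ν = n, colim γ = c, colim δ = d. -/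
/-!
Every object over `U` is pulled back along the cocone `φ`, which turns the whole double pushout
diagram over `U` into a diagram of functors `J ⥤ C`. Pullback-stability of `φ` makes each pulled
back cocone a colimit cocone with the original object as apex, and the van Kampen property of the
two pushouts along monomorphisms makes every component square of the pulled back diagram a
pushout, since all the vertical faces of the resulting cubes are pullbacks by pasting.
-/

open CategoryTheory CategoryTheory.Limits

namespace CategoryTheory

variable {C : Type*} [Category C]

theorem IsPullback.exists_lift_isPullback {P Q A B E F : C} {p₁ : P ⟶ A} {p₂ : P ⟶ E}
    {q₁ : Q ⟶ B} {q₂ : Q ⟶ E} {pA : A ⟶ F} {pB : B ⟶ F} {g : E ⟶ F} {s : A ⟶ B}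
    (hP : IsPullback p₁ p₂ pA g) (hQ : IsPullback q₁ q₂ pB g) (hs : s ≫ pB = pA) :
    ∃ k : P ⟶ Q, k ≫ q₂ = p₂ ∧ IsPullback k p₁ q₁ s := by
  subst hs
  exact ⟨_, hQ.flip.lift_fst _ _ _, IsPullback.of_right' hP.flip hQ.flip⟩

variable {J : Type*} [Category J] {U : C} {𝓤 : J ⥤ C} {φ : 𝓤 ⟶ (Functor.const J).obj U}

theorem NatTrans.Equifibered.of_isPullback_const {V : C} {p : V ⟶ U} {𝓥 : J ⥤ C}
    {ψ : 𝓥 ⟶ (Functor.const J).obj V} {π : 𝓥 ⟶ 𝓤}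
    (h : ∀ i, IsPullback (ψ.app i) (π.app i) p (φ.app i)) : NatTrans.Equifibered π := by
  intro i i' f
  refine IsPullback.of_right ?_ (π.naturality f) (h i')
  simpa using h i

theorem IsUniversalColimit.nonempty_isColimit_of_isPullback_const
    (hφ : IsUniversalColimit (⟨U, φ⟩ : Cocone 𝓤)) {V : C} {p : V ⟶ U} {𝓥 : J ⥤ C}
    {ψ : 𝓥 ⟶ (Functor.const J).obj V} {π : 𝓥 ⟶ 𝓤}
    (h : ∀ i, IsPullback (ψ.app i) (π.app i) p (φ.app i)) :
    Nonempty (IsColimit (⟨V, ψ⟩ : Cocone 𝓥)) :=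
  hφ ⟨V, ψ⟩ π p (by ext i; exact (h i).w.symm) (.of_isPullback_const h) h

theorem IsPullback.exists_lift_isPullback_const {V V' : C} {p : V ⟶ U} {p' : V' ⟶ U}
    {𝓥 𝓥' : J ⥤ C} {ψ : 𝓥 ⟶ (Functor.const J).obj V} {π : 𝓥 ⟶ 𝓤}
    {ψ' : 𝓥' ⟶ (Functor.const J).obj V'} {π' : 𝓥' ⟶ 𝓤}
    (hP : IsPullback ψ π ((Functor.const J).map p) φ)
    (hQ : IsPullback ψ' π' ((Functor.const J).map p') φ) (s : V ⟶ V') (hs : s ≫ p' = p) :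
    ∃ k : 𝓥 ⟶ 𝓥', k ≫ π' = π ∧ IsPullback k ψ ψ' ((Functor.const J).map s) :=
  hP.exists_lift_isPullback hQ (by rw [← Functor.map_comp, hs])

variable [HasPullbacks C]

theorem IsPushout.app_of_isPullback_const [Adhesive C] {W X Y Z : C} {f : W ⟶ X} {g : W ⟶ Y}
    {h : X ⟶ Z} {i : Y ⟶ Z} [Mono f] (H : IsPushout f g h i) {𝓦 𝓧 𝓨 𝓩 : J ⥤ C}
    {f' : 𝓦 ⟶ 𝓧} {g' : 𝓦 ⟶ 𝓨} {h' : 𝓧 ⟶ 𝓩} {i' : 𝓨 ⟶ 𝓩}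
    {ψW : 𝓦 ⟶ (Functor.const J).obj W} {ψX : 𝓧 ⟶ (Functor.const J).obj X}
    {ψY : 𝓨 ⟶ (Functor.const J).obj Y} {ψZ : 𝓩 ⟶ (Functor.const J).obj Z}
    (hf : IsPullback f' ψW ψX ((Functor.const J).map f))
    (hg : IsPullback g' ψW ψY ((Functor.const J).map g))
    (hh : IsPullback h' ψX ψZ ((Functor.const J).map h))
    (hi : IsPullback i' ψY ψZ ((Functor.const J).map i)) (hw : f' ≫ h' = g' ≫ i') (k : J) :
    IsPushout (f'.app k) (g'.app k) (h'.app k) (i'.app k) :=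
  (Adhesive.van_kampen H _ _ _ _ _ _ _ _ (hf.app k) (hg.app k) (hh.app k).toCommSq
    (hi.app k).toCommSq ⟨NatTrans.congr_app hw k⟩).mpr ⟨hh.app k, hi.app k⟩

end CategoryTheory

theorem dpo_global_decomposition_general
    {C : Type*} [Category C] [Adhesive C] [HasPullbacks C]
    {J : Type*} [Category J]
    {L K R X Y Z : C}
    (a : K ⟶ L) (b : K ⟶ R) (m : L ⟶ X) (j : K ⟶ Y) (n : R ⟶ Z) (c : Y ⟶ X) (d : Y ⟶ Z)
    [Mono a] [Mono b]
    (hpo₁ : IsPushout a j m c) (hpo₂ : IsPushout j b d n)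
    {U : C} (w : X ⟶ U) (t : Z ⟶ U) (hwt : c ≫ w = d ≫ t)
    (𝓤 : J ⥤ C) (φ : 𝓤 ⟶ (Functor.const J).obj U)
    (hφuniv : IsUniversalColimit (⟨U, φ⟩ : Cocone 𝓤))
    (𝓧 : J ⥤ C) (ξ : 𝓧 ⟶ (Functor.const J).obj X)
    (ω : 𝓧 ⟶ 𝓤)
    (hω : ∀ i : J, IsPullback (ξ.app i) (ω.app i) w (φ.app i)) :
    ∃ (𝓛 𝓚 𝓡 𝓨 𝓩 : J ⥤ C)
      (α : 𝓚 ⟶ 𝓛) (β : 𝓚 ⟶ 𝓡) (ι : 𝓚 ⟶ 𝓨) (μ : 𝓛 ⟶ 𝓧) (γ : 𝓨 ⟶ 𝓧)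
      (ν : 𝓡 ⟶ 𝓩) (δ : 𝓨 ⟶ 𝓩)
      (lamL : 𝓛 ⟶ (Functor.const J).obj L) (κ : 𝓚 ⟶ (Functor.const J).obj K)
      (ρ : 𝓡 ⟶ (Functor.const J).obj R) (υ : 𝓨 ⟶ (Functor.const J).obj Y)
      (ζ : 𝓩 ⟶ (Functor.const J).obj Z),
      Nonempty (IsColimit (⟨L, lamL⟩ : Cocone 𝓛)) ∧
      Nonempty (IsColimit (⟨K, κ⟩ : Cocone 𝓚)) ∧
      Nonempty (IsColimit (⟨R, ρ⟩ : Cocone 𝓡)) ∧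
      Nonempty (IsColimit (⟨Y, υ⟩ : Cocone 𝓨)) ∧
      Nonempty (IsColimit (⟨Z, ζ⟩ : Cocone 𝓩)) ∧
      Nonempty (IsColimit (⟨X, ξ⟩ : Cocone 𝓧)) ∧
      α ≫ μ = ι ≫ γ ∧ β ≫ ν = ι ≫ δ ∧
      (∀ i : J, IsPushout (α.app i) (ι.app i) (μ.app i) (γ.app i)) ∧
      (∀ i : J, IsPushout (ι.app i) (β.app i) (δ.app i) (ν.app i)) ∧
      -- the induced morphisms on colimits are the original ones:
      α ≫ lamL = κ ≫ (Functor.const J).map a ∧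
      β ≫ ρ = κ ≫ (Functor.const J).map b ∧
      μ ≫ ξ = lamL ≫ (Functor.const J).map m ∧
      ι ≫ υ = κ ≫ (Functor.const J).map j ∧
      ν ≫ ζ = ρ ≫ (Functor.const J).map n ∧
      γ ≫ ξ = υ ≫ (Functor.const J).map c ∧
      δ ≫ ζ = υ ≫ (Functor.const J).map d := by
  have hKY : j ≫ c ≫ w = a ≫ m ≫ w := by rw [reassoc_of% hpo₁.w]
  have hKR : b ≫ n ≫ t = a ≫ m ≫ w := by rw [← reassoc_of% hpo₂.w, ← hwt, hKY]
  have hX : IsPullback ξ ω ((Functor.const J).map w) φ := .of_forall_isPullback_app hω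
  have hL := IsPullback.of_hasPullback ((Functor.const J).map (m ≫ w)) φ
  have hK := IsPullback.of_hasPullback ((Functor.const J).map (a ≫ m ≫ w)) φ
  have hR := IsPullback.of_hasPullback ((Functor.const J).map (n ≫ t)) φ
  have hY := IsPullback.of_hasPullback ((Functor.const J).map (c ≫ w)) φ
  have hZ := IsPullback.of_hasPullback ((Functor.const J).map t) φ
  obtain ⟨α, hα, hαL⟩ := hK.exists_lift_isPullback_const hL a rfl
  obtain ⟨β, hβ, hβR⟩ := hK.exists_lift_isPullback_const hR b hKR
  obtain ⟨ι, hι, hιY⟩ := hK.exists_lift_isPullback_const hY j hKY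
  obtain ⟨μ, hμ, hμX⟩ := hL.exists_lift_isPullback_const hX m rfl
  obtain ⟨γ, hγ, hγX⟩ := hY.exists_lift_isPullback_const hX c rfl
  obtain ⟨ν, hν, hνZ⟩ := hR.exists_lift_isPullback_const hZ n rfl
  obtain ⟨δ, hδ, hδZ⟩ := hY.exists_lift_isPullback_const hZ d hwt.symm
  have hαμ : α ≫ μ = ι ≫ γ := hX.hom_ext
    (by simp only [Category.assoc, hμX.w, hγX.w, reassoc_of% hαL.w, reassoc_of% hιY.w,
      ← Functor.map_comp, hpo₁.w])
    (by simp only [Category.assoc, hμ, hγ, hα, hι])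
  have hβν : β ≫ ν = ι ≫ δ := hZ.hom_ext
    (by simp only [Category.assoc, hνZ.w, hδZ.w, reassoc_of% hβR.w, reassoc_of% hιY.w,
      ← Functor.map_comp, hpo₂.w])
    (by simp only [Category.assoc, hν, hδ, hβ, hι])
  exact ⟨_, _, _, _, _, α, β, ι, μ, γ, ν, δ, _, _, _, _, _,
    hφuniv.nonempty_isColimit_of_isPullback_const hL.app,
    hφuniv.nonempty_isColimit_of_isPullback_const hK.app,
    hφuniv.nonempty_isColimit_of_isPullback_const hR.app,
    hφuniv.nonempty_isColimit_of_isPullback_const hY.app,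
    hφuniv.nonempty_isColimit_of_isPullback_const hZ.app,
    hφuniv.nonempty_isColimit_of_isPullback_const hω, hαμ, hβν,
    hpo₁.app_of_isPullback_const hαL hιY hμX hγX hαμ,
    fun i => (hpo₂.flip.app_of_isPullback_const hβR hιY hνZ hδZ hβν i).flip,
    hαL.w, hβR.w, hμX.w, hιY.w, hνZ.w, hγX.w, hδZ.w⟩

/-- Global decomposition for double pushout rewriting: a double pushout
transformation diagram can be decomposed along a pullback-stable colimit decomposition of
an object `U` assembling the whole transformation, pulled back to `X`. -/
theorem dpo_global_decomposition
    {C : Type*} [Category C] [Adhesive C] [HasPullbacks C]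
    {J : Type*} [Category J]
    {L K R X Y Z : C}
    (a : K ⟶ L) (b : K ⟶ R) (m : L ⟶ X) (j : K ⟶ Y) (n : R ⟶ Z) (c : Y ⟶ X) (d : Y ⟶ Z)
    [Mono a] [Mono b]
    (hpo₁ : IsPushout a j m c) (hpo₂ : IsPushout j b d n)
    {U : C} (w : X ⟶ U) (t : Z ⟶ U) (hwt : c ≫ w = d ≫ t)
    (𝓤 : J ⥤ C) (φ : 𝓤 ⟶ (Functor.const J).obj U)
    (hφcolim : Nonempty (IsColimit (⟨U, φ⟩ : Cocone 𝓤)))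
    (hφuniv : IsUniversalColimit (⟨U, φ⟩ : Cocone 𝓤))
    (𝓧 : J ⥤ C) (ξ : 𝓧 ⟶ (Functor.const J).obj X)
    (ω : 𝓧 ⟶ 𝓤)
    (hω : ∀ i : J, IsPullback (ξ.app i) (ω.app i) w (φ.app i)) :
    ∃ (𝓛 𝓚 𝓡 𝓨 𝓩 : J ⥤ C)
      (α : 𝓚 ⟶ 𝓛) (β : 𝓚 ⟶ 𝓡) (ι : 𝓚 ⟶ 𝓨) (μ : 𝓛 ⟶ 𝓧) (γ : 𝓨 ⟶ 𝓧)
      (ν : 𝓡 ⟶ 𝓩) (δ : 𝓨 ⟶ 𝓩)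
      (lamL : 𝓛 ⟶ (Functor.const J).obj L) (κ : 𝓚 ⟶ (Functor.const J).obj K)
      (ρ : 𝓡 ⟶ (Functor.const J).obj R) (υ : 𝓨 ⟶ (Functor.const J).obj Y)
      (ζ : 𝓩 ⟶ (Functor.const J).obj Z),
      Nonempty (IsColimit (⟨L, lamL⟩ : Cocone 𝓛)) ∧
      Nonempty (IsColimit (⟨K, κ⟩ : Cocone 𝓚)) ∧
      Nonempty (IsColimit (⟨R, ρ⟩ : Cocone 𝓡)) ∧
      Nonempty (IsColimit (⟨Y, υ⟩ : Cocone 𝓨)) ∧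
      Nonempty (IsColimit (⟨Z, ζ⟩ : Cocone 𝓩)) ∧
      Nonempty (IsColimit (⟨X, ξ⟩ : Cocone 𝓧)) ∧
      α ≫ μ = ι ≫ γ ∧ β ≫ ν = ι ≫ δ ∧
      (∀ i : J, IsPushout (α.app i) (ι.app i) (μ.app i) (γ.app i)) ∧
      (∀ i : J, IsPushout (ι.app i) (β.app i) (δ.app i) (ν.app i)) ∧
      -- the induced morphisms on colimits are the original ones:
      α ≫ lamL = κ ≫ (Functor.const J).map a ∧
      β ≫ ρ = κ ≫ (Functor.const J).map b ∧
      μ ≫ ξ = lamL ≫ (Functor.const J).map m ∧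
      ι ≫ υ = κ ≫ (Functor.const J).map j ∧
      ν ≫ ζ = ρ ≫ (Functor.const J).map n ∧
      γ ≫ ξ = υ ≫ (Functor.const J).map c ∧
      δ ≫ ζ = υ ≫ (Functor.const J).map d :=
  dpo_global_decomposition_general a b m j n c d hpo₁ hpo₂ w t hwt 𝓤 φ hφuniv 𝓧 ξ ω hω
end

section
/- (Accommodated Completeness Theorem.) Let C be an adhesive category and J a category. Suppose given: a functor 𝓧 : J ⥤ C with a pullback-stable (universal) colimit cocone ξ : 𝓧 ⟶ Δ X; a rule L ←a− K −b→ R with a a monomorphism; a double pushout transformation diagram for this rule with match m : L → X (i.e. morphisms j : K → Y, n : R → Z, c : Y → X, d : Y → Z making the two DPO pushout squares); the additional assumption that at least one of m and b is a monomorphism; and an accommodation, namely a functor 𝓡 : J ⥤ C with a pullback-stable (universal) colimit cocone ρ : 𝓡 ⟶ Δ R such that pulling back ρ along b and pulling back ξ along m ∘ a yield isomorphic results, i.e. there exist a functor 𝓚' : J ⥤ C, a cocone θ : 𝓚' ⟶ Δ K, and natural transformations σ : 𝓚' ⟶ 𝓡 and χ : 𝓚' ⟶ 𝓧 such that for every object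 i of J the squares b ∘ θ_i = ρ_i ∘ σ_i and (m ∘ a) ∘ θ_i = ξ_i ∘ χ_i are pullbacks. Then the local decomposition problem has a solution: there exist functors 𝓛, 𝓚, 𝓨, 𝓩 : J ⥤ C, natural transformations α : 𝓚 ⟶ 𝓛, β : 𝓚 ⟶ 𝓡, μ : 𝓛 ⟶ 𝓧, ι : 𝓚 ⟶ 𝓨, ν : 𝓡 ⟶ 𝓩, γ : 𝓨 ⟶ 𝓧, δ : 𝓨 ⟶ 𝓩 with μ ∘ α = γ ∘ ι and ν ∘ β = δ ∘ ι, and colimit cocones of 𝓛, 𝓚, 𝓨, 𝓩 with apexes L, K, Y', Z' for some objects Y', Z', such that colim μ = m, colim α = a and colim β = b (computed with respect to the given colimit cocones ξ and ρ), and for every object i of J the component diagram (rule 𝓛_i ←α_i− 𝓚_i −β_i→ 𝓡_i with morphisms μ_i, ι_i, ν_i, γ_i, δ_i) is a double pushout transformation diagram in C. -/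
/-!
Pull the given decomposition `ξ` of `X` back along `m` and `c` to get diagrams `𝓛` and `𝓨`; the
accommodation already provides `𝓚'` as its pullback along `a ≫ m`, and pullback pasting yields the
maps `α : 𝓚' ⟶ 𝓛` and `ι : 𝓚' ⟶ 𝓨`. Since `ξ` is universal, `L`, `K` and `Y` are the colimits of
these pullbacks. At each index the square `(α, ι, μ, γ)` sits over the pushout `(a, j, m, c)` along
the mono `a` with pullback sides, so the van Kampen property makes it a pushout. The second squares
are taken to be the componentwise pushouts of `ι` and `σ`, which exist because `σ` is a pullback of
`b` and `ι` a pullback of `j`, which is mono when `m` is. Colimits commute with pushouts, so `Z`,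
the pushout of `Y ← K → R`, is the colimit of the resulting diagram `𝓩`.
-/

open CategoryTheory Limits Functor

namespace CategoryTheory

variable {J : Type*} [Category J] {C : Type*} [Category C]

theorem NatTrans.Equifibered.of_isPullback_ι {F G : J ⥤ C} {c : Cocone F} {d : Cocone G}
    (τ : F ⟶ G) (f : c.pt ⟶ d.pt) (h : ∀ i, IsPullback (c.ι.app i) (τ.app i) f (d.ι.app i)) :
    NatTrans.Equifibered τ := fun i _ g =>
  IsPullback.of_right (by simpa using h i) (τ.naturality g) (h _)

theorem IsUniversalColimit.nonempty_isColimit_of_isPullback {F F' : J ⥤ C} {c : Cocone F}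
    (hc : IsUniversalColimit c) {c' : Cocone F'} (τ : F' ⟶ F) (f : c'.pt ⟶ c.pt)
    (h : ∀ i, IsPullback (c'.ι.app i) (τ.app i) f (c.ι.app i)) : Nonempty (IsColimit c') :=
  hc c' τ f (by ext i; exact (h i).w.symm) (.of_isPullback_ι τ f h) h

theorem exists_isPushout_app {F G H : J ⥤ C} (p : F ⟶ G) (q : F ⟶ H)
    [∀ i, HasPushout (p.app i) (q.app i)] :
    ∃ (P : J ⥤ C) (u : G ⟶ P) (v : H ⟶ P),
      ∀ i, IsPushout (p.app i) (q.app i) (u.app i) (v.app i) := by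
  have (i : J) : HasColimit ((span p q).flip.obj i) :=
    hasColimit_of_iso (F := span (p.app i) (q.app i)) (spanCompIso ((evaluation J C).obj i) p q)
  exact ⟨pushout p q, pushout.inl p q, pushout.inr p q,
    fun i => (IsPushout.of_hasPushout p q).map ((evaluation J C).obj i)⟩

-- Colimits commute with pushouts.
theorem exists_isColimit_of_isPushout_app {F G H P : J ⥤ C} {p : F ⟶ G} {q : F ⟶ H}
    {u : G ⟶ P} {v : H ⟶ P} (hP : ∀ i, IsPushout (p.app i) (q.app i) (u.app i) (v.app i))
    {cF : Cocone F} {cG : Cocone G} {cH : Cocone H}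
    (hF : IsColimit cF) (hG : IsColimit cG) (hH : IsColimit cH)
    {f : cF.pt ⟶ cG.pt} {g : cF.pt ⟶ cH.pt} {Z : C} {h : cG.pt ⟶ Z} {k : cH.pt ⟶ Z}
    (hsq : IsPushout f g h k)
    (hf : ∀ i, p.app i ≫ cG.ι.app i = cF.ι.app i ≫ f)
    (hg : ∀ i, q.app i ≫ cH.ι.app i = cF.ι.app i ≫ g) :
    ∃ ζ : P ⟶ (const J).obj Z, Nonempty (IsColimit (Cocone.mk Z ζ)) := by
  have hPJ := IsPushout.of_forall_isPushout_app hP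
  obtain ⟨ζ, hu, hv⟩ : ∃ ζ : P ⟶ (const J).obj Z,
      u ≫ ζ = cG.ι ≫ (const J).map h ∧ v ≫ ζ = cH.ι ≫ (const J).map k :=
    ⟨hPJ.desc _ _ (by ext i; simp [reassoc_of% hf i, reassoc_of% hg i, hsq.w]),
      hPJ.inl_desc _ _ _, hPJ.inr_desc _ _ _⟩
  refine ⟨ζ, ⟨IsColimit.ofExistsUnique fun s => ?_⟩⟩
  obtain ⟨dG, hdG⟩ : ∃ dG : cG.pt ⟶ s.pt, ∀ i, cG.ι.app i ≫ dG = u.app i ≫ s.ι.app i :=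
    ⟨hG.desc ((Cocone.precompose u).obj s), hG.fac _⟩
  obtain ⟨dH, hdH⟩ : ∃ dH : cH.pt ⟶ s.pt, ∀ i, cH.ι.app i ≫ dH = v.app i ≫ s.ι.app i :=
    ⟨hH.desc ((Cocone.precompose v).obj s), hH.fac _⟩
  have hw : f ≫ dG = g ≫ dH := hF.hom_ext fun i => by
    rw [← reassoc_of% hf i, ← reassoc_of% hg i, hdG, hdH, reassoc_of% (hP i).w]
  have hu' (i : J) : u.app i ≫ ζ.app i = cG.ι.app i ≫ h := congr_app hu i
  have hv' (i : J) : v.app i ≫ ζ.app i = cH.ι.app i ≫ k := congr_app hv i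
  refine ⟨hsq.desc dG dH hw, fun i => (hP i).hom_ext ?_ ?_, fun d hd => hsq.hom_ext ?_ ?_⟩
  · simp [reassoc_of% hu' i, hdG]
  · simp [reassoc_of% hv' i, hdH]
  · exact hG.hom_ext fun i => by simp [← reassoc_of% hu' i, hd, hdG]
  · exact hH.hom_ext fun i => by simp [← reassoc_of% hv' i, hd, hdH]

theorem IsPullback.exists_split_vert {D : Type*} [Category D] {P K L X A : D} {θ : P ⟶ K}
    {χ : P ⟶ A} {f : K ⟶ L} {g : L ⟶ X} {ξ : A ⟶ X} [HasPullback ξ g]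
    (h : IsPullback θ χ (f ≫ g) ξ) :
    ∃ (Q : D) (μ : Q ⟶ A) (fst : Q ⟶ L) (α : P ⟶ Q),
      IsPullback fst μ g ξ ∧ IsPullback θ α f fst ∧ α ≫ μ = χ :=
  have hQ := (IsPullback.of_hasPullback ξ g).flip
  ⟨_, _, _, _, hQ, h.of_bot' hQ, hQ.lift_snd _ _ _⟩

theorem IsPullback.mono_snd {P A B D : C} {fst : P ⟶ A} {snd : P ⟶ B} {f : A ⟶ D} {g : B ⟶ D}
    (h : IsPullback fst snd f g) [Mono f] : Mono snd :=
  PullbackCone.mono_snd_of_is_pullback_of_mono h.isLimit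

variable [Adhesive C]

theorem Adhesive.hasPushout_of_isPullback {P K A B A' B' : C} {θ : P ⟶ K} {p : P ⟶ A}
    {q : P ⟶ B} {f : K ⟶ A'} {g : K ⟶ B'} {fA : A ⟶ A'} {gB : B ⟶ B'}
    (hp : IsPullback θ p f fA) (hq : IsPullback θ q g gB) (hfg : Mono f ∨ Mono g) :
    HasPushout p q := by
  rcases hfg with hf | hg
  · have := hp.mono_snd
    infer_instance
  · have := hq.mono_snd
    exact hasPushout_symmetry q p

theorem Adhesive.isPushout_app_of_isPullback_const [HasPullbacks C] {K L Y X : C}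
    {a : K ⟶ L} {j : K ⟶ Y} {m : L ⟶ X} {c : Y ⟶ X} [Mono a] (H : IsPushout a j m c)
    {𝓚 𝓛 𝓨 𝓧 : J ⥤ C} {α : 𝓚 ⟶ 𝓛} {ι : 𝓚 ⟶ 𝓨} {μ : 𝓛 ⟶ 𝓧} {γ : 𝓨 ⟶ 𝓧}
    {θ : 𝓚 ⟶ (const J).obj K} {lamL : 𝓛 ⟶ (const J).obj L} {υ : 𝓨 ⟶ (const J).obj Y}
    {ξ : 𝓧 ⟶ (const J).obj X}
    (hα : IsPullback θ α ((const J).map a) lamL) (hι : IsPullback θ ι ((const J).map j) υ)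
    (hμ : IsPullback lamL μ ((const J).map m) ξ) (hγ : IsPullback υ γ ((const J).map c) ξ)
    (w : α ≫ μ = ι ≫ γ) (i : J) : IsPushout (α.app i) (ι.app i) (μ.app i) (γ.app i) :=
  (Adhesive.van_kampen H _ _ _ _ _ _ _ _ (hα.app i).flip (hι.app i).flip
    (hμ.app i).flip.toCommSq (hγ.app i).flip.toCommSq ⟨congr_app w i⟩).mpr
    ⟨(hμ.app i).flip, (hγ.app i).flip⟩

end CategoryTheory

theorem accommodated_completeness_general
    {C : Type*} [Category C] [Adhesive C] [HasPullbacks C]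
    {J : Type*} [Category J]
    -- a pullback-stable colimit decomposition of the state X
    {X : C} (𝓧 : J ⥤ C) (ξ : 𝓧 ⟶ (Functor.const J).obj X)
    (hξuniv : IsUniversalColimit (⟨X, ξ⟩ : Cocone 𝓧))
    -- a rule with a mono, and a DPO transformation at match m
    {L K R Y Z : C} (a : K ⟶ L) (b : K ⟶ R) [Mono a]
    (m : L ⟶ X) (j : K ⟶ Y) (n : R ⟶ Z) (c : Y ⟶ X) (d : Y ⟶ Z)
    (hpo₁ : IsPushout a j m c) (hpo₂ : IsPushout j b d n)
    (hmb : Mono m ∨ Mono b)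
    -- an accommodation: a pullback-stable colimit decomposition of R such that pulling
    -- back ρ along b and pulling back ξ along m ∘ a yield isomorphic results
    (𝓡 : J ⥤ C) (ρ : 𝓡 ⟶ (Functor.const J).obj R)
    (hρcolim : Nonempty (IsColimit (⟨R, ρ⟩ : Cocone 𝓡)))
    (𝓚' : J ⥤ C) (θ : 𝓚' ⟶ (Functor.const J).obj K)
    (σ : 𝓚' ⟶ 𝓡) (χ : 𝓚' ⟶ 𝓧)
    (hσ : ∀ i : J, IsPullback (θ.app i) (σ.app i) b (ρ.app i))
    (hχ : ∀ i : J, IsPullback (θ.app i) (χ.app i) (a ≫ m) (ξ.app i)) :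
    -- the solution of the local decomposition problem
    ∃ (𝓛 𝓚 𝓨 𝓩 : J ⥤ C)
      (α : 𝓚 ⟶ 𝓛) (β : 𝓚 ⟶ 𝓡) (μ : 𝓛 ⟶ 𝓧) (ι : 𝓚 ⟶ 𝓨) (ν : 𝓡 ⟶ 𝓩)
      (γ : 𝓨 ⟶ 𝓧) (δ : 𝓨 ⟶ 𝓩)
      (lamL : 𝓛 ⟶ (Functor.const J).obj L) (κ : 𝓚 ⟶ (Functor.const J).obj K)
      (Y' Z' : C) (υ : 𝓨 ⟶ (Functor.const J).obj Y') (ζ : 𝓩 ⟶ (Functor.const J).obj Z'),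
      Nonempty (IsColimit (⟨L, lamL⟩ : Cocone 𝓛)) ∧
      Nonempty (IsColimit (⟨K, κ⟩ : Cocone 𝓚)) ∧
      Nonempty (IsColimit (⟨Y', υ⟩ : Cocone 𝓨)) ∧
      Nonempty (IsColimit (⟨Z', ζ⟩ : Cocone 𝓩)) ∧
      α ≫ μ = ι ≫ γ ∧ β ≫ ν = ι ≫ δ ∧
      -- colim μ = m, colim α = a, colim β = b (w.r.t. the given cocones ξ and ρ):
      μ ≫ ξ = lamL ≫ (Functor.const J).map m ∧
      α ≫ lamL = κ ≫ (Functor.const J).map a ∧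
      β ≫ ρ = κ ≫ (Functor.const J).map b ∧
      -- each component diagram is a double pushout transformation diagram:
      (∀ i : J, IsPushout (α.app i) (ι.app i) (μ.app i) (γ.app i)) ∧
      (∀ i : J, IsPushout (ι.app i) (β.app i) (δ.app i) (ν.app i)) := by
  obtain ⟨hR⟩ := hρcolim
  have hKX : IsPullback θ χ ((const J).map (a ≫ m)) ξ := .of_forall_isPullback_app hχ
  have hKR : IsPullback θ σ ((const J).map b) ρ := .of_forall_isPullback_app hσ
  obtain ⟨𝓛, μ, lamL, α, hL, hKL, hαμ⟩ :=
    IsPullback.exists_split_vert ((const J).map_comp a m ▸ hKX)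
  obtain ⟨𝓨, γ, υ, ι, hY, hKY, hιγ⟩ :=
    IsPullback.exists_split_vert ((const J).map_comp j c ▸ hpo₁.w ▸ hKX)
  have hmj : Mono j ∨ Mono b :=
    hmb.imp_left fun (_ : Mono m) => (Adhesive.isPullback_of_isPushout_of_mono_left hpo₁).mono_snd
  have (i : J) : HasPushout (ι.app i) (σ.app i) :=
    Adhesive.hasPushout_of_isPullback (hKY.app i) (hσ i) hmj
  obtain ⟨𝓩, δ, ν, hDPO₂⟩ := exists_isPushout_app ι σ
  obtain ⟨hKcolim⟩ := hξuniv.nonempty_isColimit_of_isPullback (c' := ⟨K, θ⟩) χ (a ≫ m) hχ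
  obtain ⟨hYcolim⟩ := hξuniv.nonempty_isColimit_of_isPullback (c' := ⟨Y, υ⟩) γ c (hY.app ·)
  obtain ⟨ζ, hZcolim⟩ := exists_isColimit_of_isPushout_app hDPO₂ hKcolim hYcolim hR hpo₂
    (fun i => (hKY.app i).w.symm) (fun i => (hKR.app i).w.symm)
  refine ⟨𝓛, 𝓚', 𝓨, 𝓩, α, σ, μ, ι, ν, γ, δ, lamL, θ, Y, Z, υ, ζ,
    hξuniv.nonempty_isColimit_of_isPullback μ m (hL.app ·), ⟨hKcolim⟩, ⟨hYcolim⟩, hZcolim,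
    by rw [hαμ, hιγ], (IsPushout.of_forall_isPushout_app hDPO₂).w.symm, hL.w.symm, hKL.w.symm,
    hKR.w.symm, Adhesive.isPushout_app_of_isPullback_const hpo₁ hKL hKY hL hY (by rw [hαμ, hιγ]),
    hDPO₂⟩

/-- Accommodated Completeness Theorem: in an adhesive category, a local
decomposition problem equipped with an accommodation has a solution. -/
theorem accommodated_completeness
    {C : Type*} [Category C] [Adhesive C] [HasPullbacks C]
    {J : Type*} [Category J]
    -- a pullback-stable colimit decomposition of the state X
    {X : C} (𝓧 : J ⥤ C) (ξ : 𝓧 ⟶ (Functor.const J).obj X)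
    (hξcolim : Nonempty (IsColimit (⟨X, ξ⟩ : Cocone 𝓧)))
    (hξuniv : IsUniversalColimit (⟨X, ξ⟩ : Cocone 𝓧))
    -- a rule with a mono, and a DPO transformation at match m
    {L K R Y Z : C} (a : K ⟶ L) (b : K ⟶ R) [Mono a]
    (m : L ⟶ X) (j : K ⟶ Y) (n : R ⟶ Z) (c : Y ⟶ X) (d : Y ⟶ Z)
    (hpo₁ : IsPushout a j m c) (hpo₂ : IsPushout j b d n)
    (hmb : Mono m ∨ Mono b)
    -- an accommodation: a pullback-stable colimit decomposition of R such that pulling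
    -- back ρ along b and pulling back ξ along m ∘ a yield isomorphic results
    (𝓡 : J ⥤ C) (ρ : 𝓡 ⟶ (Functor.const J).obj R)
    (hρcolim : Nonempty (IsColimit (⟨R, ρ⟩ : Cocone 𝓡)))
    (hρuniv : IsUniversalColimit (⟨R, ρ⟩ : Cocone 𝓡))
    (𝓚' : J ⥤ C) (θ : 𝓚' ⟶ (Functor.const J).obj K)
    (σ : 𝓚' ⟶ 𝓡) (χ : 𝓚' ⟶ 𝓧)
    (hσ : ∀ i : J, IsPullback (θ.app i) (σ.app i) b (ρ.app i))
    (hχ : ∀ i : J, IsPullback (θ.app i) (χ.app i) (a ≫ m) (ξ.app i)) :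
    -- the solution of the local decomposition problem
    ∃ (𝓛 𝓚 𝓨 𝓩 : J ⥤ C)
      (α : 𝓚 ⟶ 𝓛) (β : 𝓚 ⟶ 𝓡) (μ : 𝓛 ⟶ 𝓧) (ι : 𝓚 ⟶ 𝓨) (ν : 𝓡 ⟶ 𝓩)
      (γ : 𝓨 ⟶ 𝓧) (δ : 𝓨 ⟶ 𝓩)
      (lamL : 𝓛 ⟶ (Functor.const J).obj L) (κ : 𝓚 ⟶ (Functor.const J).obj K)
      (Y' Z' : C) (υ : 𝓨 ⟶ (Functor.const J).obj Y') (ζ : 𝓩 ⟶ (Functor.const J).obj Z'),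
      Nonempty (IsColimit (⟨L, lamL⟩ : Cocone 𝓛)) ∧
      Nonempty (IsColimit (⟨K, κ⟩ : Cocone 𝓚)) ∧
      Nonempty (IsColimit (⟨Y', υ⟩ : Cocone 𝓨)) ∧
      Nonempty (IsColimit (⟨Z', ζ⟩ : Cocone 𝓩)) ∧
      α ≫ μ = ι ≫ γ ∧ β ≫ ν = ι ≫ δ ∧
      -- colim μ = m, colim α = a, colim β = b (w.r.t. the given cocones ξ and ρ):
      μ ≫ ξ = lamL ≫ (Functor.const J).map m ∧
      α ≫ lamL = κ ≫ (Functor.const J).map a ∧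
      β ≫ ρ = κ ≫ (Functor.const J).map b ∧
      -- each component diagram is a double pushout transformation diagram:
      (∀ i : J, IsPushout (α.app i) (ι.app i) (μ.app i) (γ.app i)) ∧
      (∀ i : J, IsPushout (ι.app i) (β.app i) (δ.app i) (ν.app i)) :=
  accommodated_completeness_general 𝓧 ξ hξuniv a b m j n c d hpo₁ hpo₂ hmb 𝓡 ρ hρcolim 𝓚' θ σ χ hσ
    hχ
end

section
/- Let C be a category with pullbacks and J a category. Let 𝓛 : J ⥤ C be a functor with a Van Kampen colimit cocone λ : 𝓛 ⟶ Δ L, let α : 𝓚 ⟶ 𝓛 be a cartesian natural transformation such that every component α_i : 𝓚_i → 𝓛_i is a monomorphism, and let κ : 𝓚 ⟶ Δ K be a colimit cocone of 𝓚. Then the induced morphism colim α : K → L (the unique morphism t with λ ∘ α = Δt ∘ κ) is a monomorphism. -/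
open CategoryTheory CategoryTheory.Limits

/-!
Since each `α i` is mono, each square `α i ≫ λ i = κ i ≫ t` (a pullback by the Van Kampen
property) stays a pullback when `κ i` is replaced by `κ i ≫ Δ` into the kernel pair
`K ×_L K` of `t`. The Van Kampen property then makes `K ×_L K` a colimit of `𝓚` through
the cocone `κ ≫ Δ`, so the diagonal `Δ : K ⟶ K ×_L K` is an isomorphism, i.e. `t` is mono.
-/

section

variable {C : Type*} [Category C]

theorem CategoryTheory.IsPullback.comp_diagonal_of_mono {X Y Z W : C}
    {f : X ⟶ Y} {g : X ⟶ Z} {h : Y ⟶ W} {k : Z ⟶ W} [HasPullback h h] [Mono g]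
    (H : IsPullback f g h k) :
    IsPullback (f ≫ pullback.diagonal h) g (pullback.snd h h ≫ h) k := by
  have hf : IsPullback f (𝟙 X) h (f ≫ h) := by
    simpa [← H.w] using (IsKernelPair.id_of_mono g).paste_horiz H
  have hdiag : IsPullback (f ≫ pullback.diagonal h) (𝟙 X) (pullback.snd h h) f :=
    IsPullback.of_right (by simpa using hf) (by simp) (IsPullback.of_hasPullback h h)
  simpa using hdiag.paste_vert H

theorem CategoryTheory.Limits.mono_of_isColimit_extend_diagonal {J : Type*} [Category J]
    {F : J ⥤ C} {c : Cocone F} (hc : IsColimit c) {X : C} (f : c.pt ⟶ X) [HasPullback f f]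
    (hd : IsColimit (c.extend (pullback.diagonal f))) : Mono f := by
  have := IsColimit.hom_isIso hc hd (c.extendHom (pullback.diagonal f))
  exact (pullback.isIso_diagonal_iff f).mp <|
    (Cocone.forget F).map_isIso (c.extendHom (pullback.diagonal f))

end

/-- in a category with pullbacks, the morphism induced on colimits by a
cartesian (equifibered) natural transformation with monomorphic components into a diagram
with a Van Kampen colimit is a monomorphism. -/
theorem mono_colimMap_of_vanKampen
    {C : Type*} [Category C] [HasPullbacks C]
    {J : Type*} [Category J]
    {𝓛 𝓚 : J ⥤ C} {L K : C}
    (lam : 𝓛 ⟶ (Functor.const J).obj L)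
    (hlam : IsVanKampenColimit (⟨L, lam⟩ : Cocone 𝓛))
    (α : 𝓚 ⟶ 𝓛) (hα : NatTrans.Equifibered α) (hmono : ∀ i : J, Mono (α.app i))
    (κ : 𝓚 ⟶ (Functor.const J).obj K)
    (hκ : IsColimit (⟨K, κ⟩ : Cocone 𝓚)) :
    Mono (hκ.desc ((Cocone.precompose α).obj (⟨L, lam⟩ : Cocone 𝓛))) := by
  set t := hκ.desc ((Cocone.precompose α).obj (⟨L, lam⟩ : Cocone 𝓛))
  have hw : α ≫ lam = κ ≫ (Functor.const J).map t := by
    ext j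
    exact (hκ.fac ((Cocone.precompose α).obj ⟨L, lam⟩) j).symm
  have hsq : ∀ j, IsPullback (κ.app j) (α.app j) t (lam.app j) :=
    (hlam ⟨K, κ⟩ α t hw hα).mp ⟨hκ⟩
  refine mono_of_isColimit_extend_diagonal hκ t ?_
  refine ((hlam _ α (pullback.snd t t ≫ t) ?_ hα).mpr fun j => ?_).some
  · ext j
    simp [hw]
  · have := hmono j
    simpa using (hsq j).comp_diagonal_of_mono
end

section
/- (Object decomposition.) Let C be an adhesive category and let X be an object of C that is subobject-finite (its subobject poset Sub(X) is finite) and has a proper subobject. Then there exist a category J and a functor 𝓧 : J ⥤ C with a pullback-stable (universal) colimit cocone ξ : 𝓧 ⟶ Δ X such that for every object j of J the component ξ_j : 𝓧_j → X is a monomorphism and the object 𝓧_j either is an irreducible object or has no proper subobject. -/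
/-!
Induct on the size of `Sub(X)`, using as diagram all monomorphisms into `X` whose domain is
irreducible or has no proper subobject. If `X` itself is such an object, `𝟙 X` is terminal in
the diagram and there is nothing to prove. Otherwise `X` is a pushout `U ⊔_W V` of proper
subobjects, which have fewer subobjects than `X`. Every mono `A ⟶ X` of the diagram factors
through `U` or `V`: pulling the van Kampen square back along it splits `A` as a pushout of
subobjects, one of which must be all of `A`. Now pull the cocone back along any `f : P ⟶ X`:
`P` is the pushout of the pullbacks `U'`, `V'` over `W'`, each of these is by induction the
colimit of the pulled-back pieces lying over `U`, `V`, `W`, and these colimits glue to exhibit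
`P` as the colimit of all pieces.
-/

open CategoryTheory CategoryTheory.Limits

universe v u

variable {C : Type u} [Category.{v} C]

/-- A monomorphism `m : M ⟶ X` is proper if the identity of `X` is not included in it,
i.e. it does not represent the top subobject of `X`. -/
def ProperMono {M X : C} (m : M ⟶ X) : Prop :=
  Mono m ∧ ¬ ∃ f : X ⟶ M, f ≫ m = 𝟙 X

/-- An object has a proper subobject if some proper monomorphism into it exists. -/
def HasProperSubobject (X : C) : Prop :=
  ∃ (M : C) (m : M ⟶ X), ProperMono m

/-- An irreducible object: a subobject-finite object with a proper subobject such that in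
every pushout cospan `(u, v)` of a span of monomorphisms, at most one of `u` and `v` is a
proper monomorphism. -/
def IrreducibleObject (Y : C) : Prop :=
  Finite (Subobject Y) ∧ HasProperSubobject Y ∧
  ∀ {W U V : C} (wu : W ⟶ U) (wv : W ⟶ V) (u : U ⟶ Y) (v : V ⟶ Y),
    Mono wu → Mono wv → IsPushout wu wv u v → ¬(ProperMono u ∧ ProperMono v)

/-- A decomposition of an object `X` as a pullback-stable colimit of a diagram of
subobjects each of which is irreducible or has no proper subobject. -/
structure IrreducibleDecomposition (X : C) where
  /-- the shape of the decomposition -/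
  J : Type (max u v)
  [instJ : Category.{v} J]
  /-- the diagram of components -/
  diag : J ⥤ C
  /-- the colimit cocone -/
  ξ : diag ⟶ (Functor.const J).obj X
  isColimit : IsColimit (⟨X, ξ⟩ : Cocone diag)
  isUniversal : IsUniversalColimit (⟨X, ξ⟩ : Cocone diag)
  mono : ∀ j : J, Mono (ξ.app j)
  irred : ∀ j : J, IrreducibleObject (diag.obj j) ∨ ¬ HasProperSubobject (diag.obj j)

theorem isIso_of_not_properMono {A X : C} (m : A ⟶ X) [Mono m] (h : ¬ ProperMono m) :
    IsIso m := by
  obtain ⟨s, hs⟩ := not_not.mp fun h' => h ⟨inferInstance, h'⟩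
  have : IsSplitEpi m := ⟨⟨s, hs⟩⟩
  exact isIso_of_mono_of_isSplitEpi m

theorem properMono_comp {A B X : C} (f : A ⟶ B) [Mono f] {g : B ⟶ X} (hg : ProperMono g) :
    ProperMono (f ≫ g) := by
  have := hg.1
  refine ⟨inferInstance, fun ⟨s, hs⟩ => hg.2 ⟨s ≫ f, ?_⟩⟩
  rwa [Category.assoc]

theorem finite_subobject_of_mono {Y X : C} (m : Y ⟶ X) [Mono m] [Finite (Subobject X)] :
    Finite (Subobject Y) :=
  Finite.of_injective _ (Subobject.map_obj_injective m)

theorem card_subobject_lt_of_properMono {Y X : C} {m : Y ⟶ X} (hm : ProperMono m)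
    [Finite (Subobject X)] : Nat.card (Subobject Y) < Nat.card (Subobject X) := by
  have := hm.1
  have := finite_subobject_of_mono m
  have := Fintype.ofFinite (Subobject X)
  have := Fintype.ofFinite (Subobject Y)
  simp only [Nat.card_eq_fintype_card]
  refine Fintype.card_lt_of_injective_of_notMem _ (Subobject.map_obj_injective m) (b := ⊤) ?_
  rintro ⟨S, hS⟩
  have : Subobject.mk m = ⊤ :=
    top_le_iff.mp (Subobject.map_top m ▸ hS ▸ (Subobject.map m).monotone le_top)
  have := (Subobject.isIso_iff_mk_eq_top m).mpr this
  exact hm.2 ⟨inv m, IsIso.inv_hom_id m⟩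

theorem exists_lift_of_not_properMono_pullback_snd {U X A : C} {u : U ⟶ X} [Mono u]
    {a : A ⟶ X} [HasPullback u a] (h : ¬ ProperMono (pullback.snd u a)) :
    ∃ g : A ⟶ U, g ≫ u = a := by
  have := isIso_of_not_properMono _ h
  exact ⟨inv (pullback.snd u a) ≫ pullback.fst u a, by simp [pullback.condition]⟩

theorem exists_isPushout_of_not_irreducibleObject {X : C} [Finite (Subobject X)]
    (hps : HasProperSubobject X) (hX : ¬ IrreducibleObject X) :
    ∃ (W U V : C) (wu : W ⟶ U) (wv : W ⟶ V) (u : U ⟶ X) (v : V ⟶ X),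
      Mono wu ∧ Mono wv ∧ IsPushout wu wv u v ∧ ProperMono u ∧ ProperMono v := by
  simp only [IrreducibleObject, not_and, not_forall, not_not] at hX
  simpa only [exists_prop] using hX inferInstance hps

theorem isUniversalColimit_of_isTerminal {J : Type*} [Category J] {F : J ⥤ C} (c : Cocone F)
    {t : J} (ht : IsTerminal t) [IsIso (c.ι.app t)] : IsUniversalColimit c := by
  intro F' c' α f _ _ hpb
  have := (hpb t).isIso_fst_of_isIso
  exact ⟨(colimitOfDiagramTerminal ht F').ofIsoColimit
    (Cocone.ext (asIso (c'.ι.app t)) fun j => by simp)⟩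

section Restriction

variable {J I : Type*} [Category J] [Category I] {K F : J ⥤ C} {κ : Cocone K} {c : Cocone F}
  {α : F ⟶ K} {f : c.pt ⟶ κ.pt} (hpb : ∀ j, IsPullback (c.ι.app j) (α.app j) f (κ.ι.app j))
  {Φ : I ⥤ J} {κ' : Cocone (Φ ⋙ K)} {m : κ'.pt ⟶ κ.pt}
  (hm : ∀ i, κ'.ι.app i ≫ m = κ.ι.app (Φ.obj i))
  {P : C} {p : P ⟶ c.pt} {q : P ⟶ κ'.pt} (hP : IsPullback p q f m)

-- Reducible, so that instances such as `Mono p` apply to morphisms out of its apex.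
@[reducible]
noncomputable def restrictedPullbackCocone : Cocone (Φ ⋙ F) where
  pt := P
  ι.app i := hP.lift (c.ι.app (Φ.obj i)) (α.app (Φ.obj i) ≫ κ'.ι.app i)
    (by rw [Category.assoc, hm, (hpb _).w])
  ι.naturality i i' g := hP.hom_ext (by simp) (by simpa using α.app (Φ.obj i) ≫= κ'.w g)

theorem restrictedPullbackCocone_ι_app_fst (i : I) :
    (restrictedPullbackCocone hpb hm hP).ι.app i ≫ p = c.ι.app (Φ.obj i) :=
  hP.lift_fst _ _ _

theorem isColimit_restrictedPullbackCocone (hα : NatTrans.Equifibered α)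
    (hκ' : IsUniversalColimit κ') : Nonempty (IsColimit (restrictedPullbackCocone hpb hm hP)) := by
  refine hκ' _ (Functor.whiskerLeft Φ α) q (by ext i; simp [restrictedPullbackCocone])
    (hα.whiskerLeft Φ) fun i => IsPullback.of_right ?_ (hP.lift_snd _ _ _) hP
  simpa [hm] using hpb (Φ.obj i)

end Restriction

section Gluing

variable {J : Type*} [Category J] {F : J ⥤ C} {c : Cocone F}

theorem comp_desc_whisker_eq_of_hom {I : Type*} [Category I] {Φ : I ⥤ J} {d : Cocone (Φ ⋙ F)}
    (hd : IsColimit d) {y : d.pt ⟶ c.pt} [Mono y] (hy : ∀ i, d.ι.app i ≫ y = c.ι.app (Φ.obj i))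
    {j : J} {i : I} (h : j ⟶ Φ.obj i) {x : F.obj j ⟶ d.pt} (hx : x ≫ y = c.ι.app j)
    (s : Cocone F) : x ≫ hd.desc (s.whisker Φ) = s.ι.app j := by
  have : x = F.map h ≫ d.ι.app i := by
    rw [← cancel_mono y, hx, Category.assoc, hy, c.w]
  rw [this, Category.assoc, hd.fac, Cocone.whisker_ι, Functor.whiskerLeft_app, s.w]

noncomputable def isColimitOfIsPushout {IU IV IW : Type*} [Category IU] [Category IV]
    [Category IW] {ΦU : IU ⥤ J} {ΦV : IV ⥤ J} {ΦW : IW ⥤ J}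
    (hcover : ∀ j, (∃ i, Nonempty (j ⟶ ΦU.obj i)) ∨ ∃ i, Nonempty (j ⟶ ΦV.obj i))
    (hWU : ∀ k, ∃ i, Nonempty (ΦW.obj k ⟶ ΦU.obj i))
    (hWV : ∀ k, ∃ i, Nonempty (ΦW.obj k ⟶ ΦV.obj i))
    {dU : Cocone (ΦU ⋙ F)} (hU : IsColimit dU) {dV : Cocone (ΦV ⋙ F)} (hV : IsColimit dV)
    {dW : Cocone (ΦW ⋙ F)} (hW : IsColimit dW)
    {wu : dW.pt ⟶ dU.pt} {wv : dW.pt ⟶ dV.pt} {u : dU.pt ⟶ c.pt} {v : dV.pt ⟶ c.pt}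
    (hpo : IsPushout wu wv u v) [Mono u] [Mono v]
    (hu : ∀ i, dU.ι.app i ≫ u = c.ι.app (ΦU.obj i))
    (hv : ∀ i, dV.ι.app i ≫ v = c.ι.app (ΦV.obj i))
    (hw : ∀ k, dW.ι.app k ≫ wu ≫ u = c.ι.app (ΦW.obj k)) : IsColimit c where
  desc s := hpo.desc (hU.desc (s.whisker ΦU)) (hV.desc (s.whisker ΦV)) <| hW.hom_ext fun k => by
    obtain ⟨i, ⟨h⟩⟩ := hWU k
    obtain ⟨i', ⟨h'⟩⟩ := hWV k
    rw [← Category.assoc, ← Category.assoc,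
      comp_desc_whisker_eq_of_hom hU hu h (by rw [Category.assoc, hw]),
      comp_desc_whisker_eq_of_hom hV hv h' (by rw [Category.assoc, ← hpo.w, hw])]
  fac s j := by
    rcases hcover j with ⟨i, ⟨h⟩⟩ | ⟨i, ⟨h⟩⟩
    · rw [← c.w h, ← hu, Category.assoc, Category.assoc, hpo.inl_desc, ← Category.assoc]
      exact comp_desc_whisker_eq_of_hom hU hu h (by rw [Category.assoc, hu, c.w]) s
    · rw [← c.w h, ← hv, Category.assoc, Category.assoc, hpo.inr_desc, ← Category.assoc]
      exact comp_desc_whisker_eq_of_hom hV hv h (by rw [Category.assoc, hv, c.w]) s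
  uniq s g hg := hpo.hom_ext
    (hU.hom_ext fun i => by simp [reassoc_of% hu, hg])
    (hV.hom_ext fun i => by simp [reassoc_of% hv, hg])

end Gluing

def IrreducibleOrNoProperSubobject (Y : C) : Prop :=
  IrreducibleObject Y ∨ ¬ HasProperSubobject Y

/-- Over-objects rather than subobjects, so that `IrreducibleMono.map` keeps domains on the
nose. -/
def IsIrreducibleMono (X : C) : ObjectProperty (Over X) :=
  fun A => Mono A.hom ∧ IrreducibleOrNoProperSubobject A.left

abbrev IrreducibleMono (X : C) : Type (max u v) := (IsIrreducibleMono X).FullSubcategory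

def irreducibleMonoDiagram (X : C) : IrreducibleMono X ⥤ C :=
  (IsIrreducibleMono X).ι ⋙ Over.forget X

def irreducibleMonoCocone (X : C) : Cocone (irreducibleMonoDiagram X) :=
  (Over.forgetCocone X).whisker (IsIrreducibleMono X).ι

def IrreducibleMono.map {Y X : C} (m : Y ⟶ X) [Mono m] : IrreducibleMono Y ⥤ IrreducibleMono X :=
  (IsIrreducibleMono X).lift ((IsIrreducibleMono Y).ι ⋙ Over.map m)
    fun A => ⟨by have := A.property.1; exact mono_comp A.obj.hom m, A.property.2⟩

theorem IrreducibleMono.exists_hom_map {Y X : C} (m : Y ⟶ X) [Mono m] (j : IrreducibleMono X)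
    (g : j.obj.left ⟶ Y) (hg : g ≫ m = j.obj.hom) :
    ∃ i : IrreducibleMono Y, Nonempty (j ⟶ (IrreducibleMono.map m).obj i) := by
  have := j.property.1
  have : Mono g := mono_of_mono_fac hg
  exact ⟨⟨Over.mk g, inferInstanceAs (Mono g), j.property.2⟩,
    ⟨ObjectProperty.homMk (Over.homMk (𝟙 _) ((Category.id_comp _).trans hg))⟩⟩

theorem isUniversalColimit_irreducibleMonoCocone_of_irreducibleOrNoProperSubobject {X : C}
    (hX : IrreducibleOrNoProperSubobject X) : IsUniversalColimit (irreducibleMonoCocone X) := by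
  let top : IrreducibleMono X := ⟨Over.mk (𝟙 X), inferInstanceAs (Mono (𝟙 X)), hX⟩
  have htop : IsTerminal top := IsTerminal.ofUniqueHom
    (fun j => ObjectProperty.homMk (Over.homMk j.obj.hom))
    fun j g => by ext; exact (Category.comp_id _).symm.trans (Over.w g.hom)
  have : IsIso ((irreducibleMonoCocone X).ι.app top) := inferInstanceAs (IsIso (𝟙 X))
  exact isUniversalColimit_of_isTerminal _ htop

section Adhesive

variable [Adhesive C]

theorem CategoryTheory.IsPushout.exists_isPushout_pullback {W U V X P : C} {wu : W ⟶ U}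
    {wv : W ⟶ V} {u : U ⟶ X} {v : V ⟶ X} [Mono wu] [Mono u] [Mono v]
    (hpo : IsPushout wu wv u v) (f : P ⟶ X) :
    ∃ (W' : C) (wu' : W' ⟶ pullback u f) (wv' : W' ⟶ pullback v f) (g : W' ⟶ W),
      IsPullback wu' g (pullback.fst u f) wu ∧ IsPullback wv' g (pullback.fst v f) wv ∧
      IsPushout wu' wv' (pullback.snd u f) (pullback.snd v f) :=
  have := hasPullback_symmetry wu (pullback.fst u f)
  (Adhesive.van_kampen hpo).exists_cube_filling (IsPullback.of_hasPullback u f).flip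
    (IsPullback.of_hasPullback v f).flip

theorem CategoryTheory.IsPushout.exists_lift_of_irreducibleOrNoProperSubobject {W U V X A : C}
    {wu : W ⟶ U} {wv : W ⟶ V} {u : U ⟶ X} {v : V ⟶ X} [Mono wu] [Mono wv] [Mono u] [Mono v]
    (hpo : IsPushout wu wv u v) (a : A ⟶ X) (hA : IrreducibleOrNoProperSubobject A) :
    (∃ g : A ⟶ U, g ≫ u = a) ∨ ∃ g : A ⟶ V, g ≫ v = a := by
  obtain ⟨W', wu', wv', g, hwu', hwv', hpo'⟩ := hpo.exists_isPushout_pullback a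
  have := hwu'.mono_fst_of_mono
  have := hwv'.mono_fst_of_mono
  have : ¬ ProperMono (pullback.snd u a) ∨ ¬ ProperMono (pullback.snd v a) := by
    rcases hA with hA | hA
    · exact not_and_or.mp (hA.2.2 wu' wv' _ _ inferInstance inferInstance hpo')
    · exact Or.inl fun h => hA ⟨_, _, h⟩
  exact this.imp exists_lift_of_not_properMono_pullback_snd
    exists_lift_of_not_properMono_pullback_snd

theorem isUniversalColimit_irreducibleMonoCocone_of_isPushout {W U V X : C} {wu : W ⟶ U}
    {wv : W ⟶ V} {u : U ⟶ X} {v : V ⟶ X} [Mono wu] [Mono wv] [Mono u] [Mono v]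
    (hpo : IsPushout wu wv u v) (hU : IsUniversalColimit (irreducibleMonoCocone U))
    (hV : IsUniversalColimit (irreducibleMonoCocone V))
    (hW : IsUniversalColimit (irreducibleMonoCocone W)) :
    IsUniversalColimit (irreducibleMonoCocone X) := by
  intro F c α (f : c.pt ⟶ X) _ hα hpb
  obtain ⟨W', wu', wv', g, hwu', -, hpo'⟩ := hpo.exists_isPushout_pullback f
  obtain ⟨hcU⟩ := isColimit_restrictedPullbackCocone hpb (κ := irreducibleMonoCocone X)
    (Φ := IrreducibleMono.map u) (m := u) (κ' := irreducibleMonoCocone U)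
    (fun _ => rfl) (IsPullback.of_hasPullback u f).flip hα hU
  obtain ⟨hcV⟩ := isColimit_restrictedPullbackCocone hpb (κ := irreducibleMonoCocone X)
    (Φ := IrreducibleMono.map v) (m := v) (κ' := irreducibleMonoCocone V)
    (fun _ => rfl) (IsPullback.of_hasPullback v f).flip hα hV
  obtain ⟨hcW⟩ := isColimit_restrictedPullbackCocone hpb (κ := irreducibleMonoCocone X)
    (Φ := IrreducibleMono.map (wu ≫ u)) (m := wu ≫ u) (κ' := irreducibleMonoCocone W)
    (fun _ => rfl) (hwu'.paste_horiz (IsPullback.of_hasPullback u f).flip) hα hW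
  refine ⟨isColimitOfIsPushout (fun j => ?_) (fun k => ?_) (fun k => ?_) hcU hcV hcW hpo'
    (restrictedPullbackCocone_ι_app_fst _ _ _) (restrictedPullbackCocone_ι_app_fst _ _ _)
    (restrictedPullbackCocone_ι_app_fst _ _ _)⟩
  · exact (hpo.exists_lift_of_irreducibleOrNoProperSubobject j.obj.hom j.property.2).imp
      (fun ⟨g, hg⟩ => IrreducibleMono.exists_hom_map u j g hg)
      (fun ⟨g, hg⟩ => IrreducibleMono.exists_hom_map v j g hg)
  · exact IrreducibleMono.exists_hom_map u _ (k.obj.hom ≫ wu) (Category.assoc _ _ _)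
  · exact IrreducibleMono.exists_hom_map v _ (k.obj.hom ≫ wv)
      ((Category.assoc _ _ _).trans (k.obj.hom ≫= hpo.w.symm))

theorem isUniversalColimit_irreducibleMonoCocone (X : C) [Finite (Subobject X)] :
    IsUniversalColimit (irreducibleMonoCocone X) := by
  induction hn : Nat.card (Subobject X) using Nat.strong_induction_on generalizing X with
  | _ n ih =>
  by_cases hX : IrreducibleOrNoProperSubobject X
  · exact isUniversalColimit_irreducibleMonoCocone_of_irreducibleOrNoProperSubobject hX
  obtain ⟨hirr, hps⟩ : ¬ IrreducibleObject X ∧ HasProperSubobject X := by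
    simpa [IrreducibleOrNoProperSubobject, not_or] using hX
  obtain ⟨W, U, V, wu, wv, u, v, _, _, hpo, hu, hv⟩ :=
    exists_isPushout_of_not_irreducibleObject hps hirr
  have := hu.1
  have := hv.1
  have := finite_subobject_of_mono u
  have := finite_subobject_of_mono v
  have := finite_subobject_of_mono (wu ≫ u)
  exact isUniversalColimit_irreducibleMonoCocone_of_isPushout hpo
    (ih _ (hn ▸ card_subobject_lt_of_properMono hu) U rfl)
    (ih _ (hn ▸ card_subobject_lt_of_properMono hv) V rfl)
    (ih _ (hn ▸ card_subobject_lt_of_properMono (properMono_comp wu hu)) W rfl)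

end Adhesive

theorem object_decomposition_general [Adhesive C]
    (X : C) (hfin : Finite (Subobject X)) :
    Nonempty (IrreducibleDecomposition X) :=
  have huniv := isUniversalColimit_irreducibleMonoCocone X
  ⟨{ J := IrreducibleMono X
     diag := irreducibleMonoDiagram X
     ξ := (irreducibleMonoCocone X).ι
     isColimit := huniv.isColimit
     isUniversal := huniv
     mono := fun j => j.property.1
     irred := fun j => j.property.2 }⟩

/-- Object decomposition: in an adhesive category, every subobject-finite
object with a proper subobject is the pullback-stable colimit of a diagram whose objects
are monomorphically embedded and are irreducible or have no proper subobject. -/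
theorem object_decomposition [Adhesive C] [HasPullbacks C]
    (X : C) (hfin : Finite (Subobject X)) (hps : HasProperSubobject X) :
    Nonempty (IrreducibleDecomposition X) :=
  object_decomposition_general X hfin
end
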